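/- Fix d_s, d_a ≥ 1, a point s ∈ ℝ^{d_s}, a vector ā ∈ ℝ^{d_a}, and constants δ > 0, M > 0. Suppose g, h_1, …, h_{d_a} : ℝ^{d_s} → ℝ^{d_s} are twice continuously differentiable. Let F be any family of twice continuously differentiable feedback policies a : ℝ^{d_s} → ℝ^{d_a} such that a(s) = ā for every a ∈ F, and such that for every a ∈ F the closed-loop vector field X_a(x) = g(x) + Σ_{j=1}^{d_a} a_j(x) h_j(x) satisfies ‖X_a(x)‖ ≤ M, ‖DX_a(x)‖ ≤ M and ‖D²X_a(x)‖ ≤ M for all x ∈ ℝ^{d_s}. Set X̄ = g(s) + Σ_{j=1}^{d_a} ā_j h_j(s) and let V ⊆ ℝ^{d_s} be the linear span of the 2d_a + 2 vectors g(s), Dg(s)(X̄), h_1(s), …, h_{d_a}(s), Dh_1(s)(X̄), …, Dh_{d_a}(s)(X̄). Then dim V ≤ 2d_a + 2 and there is a constant C depending only on M such that for every a ∈ F, every differentiable curve z_a : [0, δ] → ℝ^{d_s} with z_a(0) = s and z_a'(t) = X_a(z_a(t)) for all t, and every t ∈ [0, δ], the Euclidean distance from z_a(t) to the affine subspace s +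 V is at most C δ³. In particular, the set of all states attained in time at most δ from s by all such feedback policies with common value ā at s lies within distance C δ³ of an affine subspace of dimension at most 2d_a + 2. -/

import Mathlib

/-!
Along a trajectory `z' = X(z)` with `z 0 = s` we have `z'' = DX(z)(X(z))`, and with `X`, `DX`,
`D²X` bounded by `M` this second derivative moves by at most `2M³t` in time `t`. Integrating
twice, `z t` is within `2M³δ³` of the second-order Taylor polynomial
`s + t X(s) + (t²/2) DX(s)(X(s))`. At `s` the feedback only enters through `ā` and `Da(s)`:
`X(s) = X̄` and `DX(s)(X̄) = Dg(s)(X̄) + ∑ⱼ (āⱼ Dhⱼ(s)(X̄) + (Da(s)(X̄))ⱼ hⱼ(s))`, so both Taylor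
coefficients lie in `V`, whatever the policy.
-/

/-- `ℝ^n` as a Euclidean space. -/
abbrev Esp (n : ℕ) := EuclideanSpace ℝ (Fin n)

/-- The closed-loop vector field `X_a(x) = g(x) + ∑ j, a_j(x) • h_j(x)` of a
control-affine system under a feedback policy `a`. -/
noncomputable def closedLoop {ds da : ℕ} (g : Esp ds → Esp ds)
    (h : Fin da → Esp ds → Esp ds) (a : Esp ds → Fin da → ℝ) : Esp ds → Esp ds :=
  fun x => g x + ∑ j, a x j • h j x

/-- The span `V` of the `2·d_a + 2` vectors
`g s`, `Dg(s)(X̄)`, `h_1 s, …, h_{d_a} s`, `Dh_1(s)(X̄), …, Dh_{d_a}(s)(X̄)`,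
where `X̄ = g s + ∑ j, ā_j • h_j s`. -/
noncomputable def attainSpan {ds da : ℕ} (g : Esp ds → Esp ds)
    (h : Fin da → Esp ds → Esp ds) (s : Esp ds) (abar : Fin da → ℝ) :
    Submodule ℝ (Esp ds) :=
  Submodule.span ℝ
    ({g s, fderiv ℝ g s (g s + ∑ j, abar j • h j s)} ∪
      Set.range (fun j => h j s) ∪
      Set.range (fun j => fderiv ℝ (h j) s (g s + ∑ j, abar j • h j s)))

open Set

section Trajectory

variable {E : Type*} [NormedAddCommGroup E] [NormedSpace ℝ E]

theorem norm_sub_le_mul_of_hasDerivWithinAt_Icc {f f' : ℝ → E} {C δ t : ℝ}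
    (hf : ∀ u ∈ Icc 0 δ, HasDerivWithinAt f (f' u) (Icc 0 δ) u)
    (hbd : ∀ u ∈ Icc 0 δ, ‖f' u‖ ≤ C) (ht : t ∈ Icc 0 δ) :
    ‖f t - f 0‖ ≤ C * t := by
  have := (convex_Icc 0 δ).norm_image_sub_le_of_norm_hasDerivWithin_le hf hbd
    ⟨le_rfl, ht.1.trans ht.2⟩ ht
  simpa [abs_of_nonneg ht.1] using this

variable {X : E → E} {z : ℝ → E} {M δ t : ℝ}

theorem norm_trajectory_sub_le (hX0 : ∀ x, ‖X x‖ ≤ M)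
    (hz : ∀ u ∈ Icc 0 δ, HasDerivAt z (X (z u)) u) (ht : t ∈ Icc 0 δ) :
    ‖z t - z 0‖ ≤ M * t :=
  norm_sub_le_mul_of_hasDerivWithinAt_Icc (fun u hu => (hz u hu).hasDerivWithinAt)
    (fun u _ => hX0 (z u)) ht

theorem norm_fderiv_apply_self_sub_le (hX : ContDiff ℝ 2 X) (hX0 : ∀ x, ‖X x‖ ≤ M)
    (hX1 : ∀ x, ‖fderiv ℝ X x‖ ≤ M) (hX2 : ∀ x, ‖fderiv ℝ (fderiv ℝ X) x‖ ≤ M) (x y : E) :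
    ‖fderiv ℝ X y (X y) - fderiv ℝ X x (X x)‖ ≤ 2 * M ^ 2 * ‖y - x‖ := by
  have hM : 0 ≤ M := (norm_nonneg _).trans (hX0 x)
  have lipX : ‖X y - X x‖ ≤ M * ‖y - x‖ :=
    convex_univ.norm_image_sub_le_of_norm_fderiv_le
      (fun u _ => hX.differentiable two_ne_zero u) (fun u _ => hX1 u) trivial trivial
  have lipDX : ‖fderiv ℝ X y - fderiv ℝ X x‖ ≤ M * ‖y - x‖ :=
    convex_univ.norm_image_sub_le_of_norm_fderiv_le
      (fun u _ => (hX.fderiv_right (m := 1) le_rfl).differentiable one_ne_zero u)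
      (fun u _ => hX2 u) trivial trivial
  have split : fderiv ℝ X y (X y) - fderiv ℝ X x (X x) =
      (fderiv ℝ X y - fderiv ℝ X x) (X y) + fderiv ℝ X x (X y - X x) := by
    simp only [sub_apply, map_sub]
    abel
  rw [split]
  calc _ ≤ ‖fderiv ℝ X y - fderiv ℝ X x‖ * ‖X y‖ + ‖fderiv ℝ X x‖ * ‖X y - X x‖ :=
        (norm_add_le _ _).trans (add_le_add (ContinuousLinearMap.le_opNorm _ _)
          (ContinuousLinearMap.le_opNorm _ _))
    _ ≤ M * ‖y - x‖ * M + M * (M * ‖y - x‖) := by gcongr; exacts [hX0 y, hX1 x]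
    _ = 2 * M ^ 2 * ‖y - x‖ := by ring

theorem norm_trajectory_sub_taylor_le (hX : ContDiff ℝ 2 X) (hX0 : ∀ x, ‖X x‖ ≤ M)
    (hX1 : ∀ x, ‖fderiv ℝ X x‖ ≤ M) (hX2 : ∀ x, ‖fderiv ℝ (fderiv ℝ X) x‖ ≤ M)
    (hz : ∀ u ∈ Icc 0 δ, HasDerivAt z (X (z u)) u) (ht : t ∈ Icc 0 δ) :
    ‖z t - z 0 - t • X (z 0) - (t ^ 2 / 2) • fderiv ℝ X (z 0) (X (z 0))‖ ≤
      2 * M ^ 3 * δ ^ 3 := by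
  set s := z 0
  set w := fderiv ℝ X s (X s)
  have hM : 0 ≤ M := (norm_nonneg _).trans (hX0 s)
  have hδ : 0 ≤ δ := ht.1.trans ht.2
  have velocity : ∀ u ∈ Icc 0 δ, ‖X (z u) - X s - u • w‖ ≤ 2 * M ^ 3 * δ ^ 2 := by
    intro u hu
    have hderiv : ∀ r ∈ Icc 0 δ, HasDerivWithinAt (fun r => X (z r) - r • w)
        (fderiv ℝ X (z r) (X (z r)) - w) (Icc 0 δ) r := fun r hr =>
      ((hX.differentiable two_ne_zero (z r)).hasFDerivAt.comp_hasDerivAt r (hz r hr)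
        |>.sub (by simpa using (hasDerivAt_id r).smul_const w)).hasDerivWithinAt
    have hbd : ∀ r ∈ Icc 0 δ, ‖fderiv ℝ X (z r) (X (z r)) - w‖ ≤ 2 * M ^ 3 * δ := by
      intro r hr
      calc _ ≤ 2 * M ^ 2 * ‖z r - s‖ := norm_fderiv_apply_self_sub_le hX hX0 hX1 hX2 s (z r)
        _ ≤ 2 * M ^ 2 * (M * δ) := by
            gcongr
            exact (norm_trajectory_sub_le hX0 hz hr).trans (by gcongr; exact hr.2)
        _ = 2 * M ^ 3 * δ := by ring
    have := norm_sub_le_mul_of_hasDerivWithinAt_Icc hderiv hbd hu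
    rw [zero_smul, sub_zero, sub_right_comm] at this
    calc _ ≤ 2 * M ^ 3 * δ * u := this
      _ ≤ 2 * M ^ 3 * δ * δ := by gcongr; exact hu.2
      _ = 2 * M ^ 3 * δ ^ 2 := by ring
  have hderiv : ∀ u ∈ Icc 0 δ, HasDerivWithinAt (fun u => z u - u • X s - (u ^ 2 / 2) • w)
      (X (z u) - X s - u • w) (Icc 0 δ) u := by
    intro u hu
    have hsq : HasDerivAt (fun r : ℝ => (r ^ 2 / 2) • w) (u • w) u := by
      simpa using ((hasDerivAt_pow 2 u).div_const 2).smul_const w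
    exact (((hz u hu).sub (by simpa using (hasDerivAt_id u).smul_const (X s))).sub
      hsq).hasDerivWithinAt
  have := norm_sub_le_mul_of_hasDerivWithinAt_Icc hderiv velocity ht
  simp only [zero_smul, sub_zero, zero_pow two_ne_zero, zero_div] at this
  rw [sub_right_comm _ s, sub_right_comm _ s]
  calc _ ≤ 2 * M ^ 3 * δ ^ 2 * t := this
    _ ≤ 2 * M ^ 3 * δ ^ 2 * δ := by gcongr; exact ht.2
    _ = 2 * M ^ 3 * δ ^ 3 := by ring

end Trajectory

section ClosedLoop

variable {ds da : ℕ} {g : Esp ds → Esp ds} {h : Fin da → Esp ds → Esp ds}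
  {a : Esp ds → Fin da → ℝ} {s : Esp ds} {abar : Fin da → ℝ}

theorem contDiff_closedLoop {n : WithTop ℕ∞} (hg : ContDiff ℝ n g)
    (hh : ∀ j, ContDiff ℝ n (h j)) (ha : ContDiff ℝ n a) :
    ContDiff ℝ n (closedLoop g h a) :=
  hg.add (ContDiff.sum fun j _ => (contDiff_pi.mp ha j).smul (hh j))

theorem fderiv_closedLoop_apply {x : Esp ds} (hg : DifferentiableAt ℝ g x)
    (hh : ∀ j, DifferentiableAt ℝ (h j) x) (ha : DifferentiableAt ℝ a x) (v : Esp ds) :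
    fderiv ℝ (closedLoop g h a) x v =
      fderiv ℝ g x v + ∑ j, (a x j • fderiv ℝ (h j) x v + fderiv ℝ a x v j • h j x) := by
  have hderiv : HasFDerivAt (closedLoop g h a)
      (fderiv ℝ g x + ∑ j, (a x j • fderiv ℝ (h j) x +
        ((ContinuousLinearMap.proj j).comp (fderiv ℝ a x)).smulRight (h j x))) x :=
    hg.hasFDerivAt.add (HasFDerivAt.fun_sum fun j _ =>
      ((ContinuousLinearMap.proj (R := ℝ) (φ := fun _ : Fin da => ℝ) j).hasFDerivAt.comp x
        ha.hasFDerivAt).smul (hh j).hasFDerivAt)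
  simp [hderiv.fderiv]

theorem closedLoop_apply_mem_attainSpan (has : a s = abar) :
    closedLoop g h a s ∈ attainSpan g h s abar := by
  rw [closedLoop, has]
  refine add_mem (Submodule.subset_span ?_) (sum_mem fun j _ => Submodule.smul_mem _ _ ?_)
  exacts [Or.inl (Or.inl (Or.inl rfl)), Submodule.subset_span (Or.inl (Or.inr ⟨j, rfl⟩))]

theorem fderiv_closedLoop_apply_mem_attainSpan (hg : DifferentiableAt ℝ g s)
    (hh : ∀ j, DifferentiableAt ℝ (h j) s) (ha : DifferentiableAt ℝ a s) (has : a s = abar) :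
    fderiv ℝ (closedLoop g h a) s (closedLoop g h a s) ∈ attainSpan g h s abar := by
  have hXs : closedLoop g h a s = g s + ∑ j, abar j • h j s := by rw [closedLoop, has]
  rw [fderiv_closedLoop_apply hg hh ha, hXs, has]
  refine add_mem (Submodule.subset_span (Or.inl (Or.inl (Or.inr rfl))))
    (sum_mem fun j _ => add_mem (Submodule.smul_mem _ _ (Submodule.subset_span ?_))
      (Submodule.smul_mem _ _ (Submodule.subset_span ?_)))
  exacts [Or.inr ⟨j, rfl⟩, Or.inl (Or.inr ⟨j, rfl⟩)]

variable (g h s abar) in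
theorem finrank_attainSpan_le : Module.finrank ℝ (attainSpan g h s abar) ≤ 2 * da + 2 := by
  set Xbar := g s + ∑ j, abar j • h j s
  let gens : Fin 2 ⊕ Fin da ⊕ Fin da → Esp ds :=
    Sum.elim ![g s, fderiv ℝ g s Xbar]
      (Sum.elim (fun j => h j s) (fun j => fderiv ℝ (h j) s Xbar))
  have hrange : attainSpan g h s abar = Submodule.span ℝ (range gens) := by
    simp only [attainSpan, gens, Set.Sum.elim_range, Matrix.range_cons, Matrix.range_empty,
      union_empty, union_singleton, insert_union, singleton_union, insert_comm (g s)]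
    rfl
  calc _ = Module.finrank ℝ (Submodule.span ℝ (range gens)) := by rw [hrange]
    _ ≤ Fintype.card (Fin 2 ⊕ Fin da ⊕ Fin da) := finrank_range_le_card gens
    _ = 2 * da + 2 := by simp only [Fintype.card_sum, Fintype.card_fin]; ring

end ClosedLoop

theorem stmt_0_general (ds da : ℕ) (M : ℝ) :
    ∃ C : ℝ, ∀ (s : Esp ds) (abar : Fin da → ℝ) (δ : ℝ), 0 < δ →
      ∀ (g : Esp ds → Esp ds) (h : Fin da → Esp ds → Esp ds),
        ContDiff ℝ 2 g → (∀ j, ContDiff ℝ 2 (h j)) →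
        Module.finrank ℝ (attainSpan g h s abar) ≤ 2 * da + 2 ∧
        ∀ F : Set (Esp ds → Fin da → ℝ),
          (∀ a ∈ F, ContDiff ℝ 2 a ∧ a s = abar ∧
            ∀ x, ‖closedLoop g h a x‖ ≤ M ∧ ‖fderiv ℝ (closedLoop g h a) x‖ ≤ M ∧
              ‖fderiv ℝ (fderiv ℝ (closedLoop g h a)) x‖ ≤ M) →
          ∀ a ∈ F, ∀ z : ℝ → Esp ds, z 0 = s →
            (∀ t ∈ Set.Icc (0 : ℝ) δ, HasDerivAt z (closedLoop g h a (z t)) t) →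
            ∀ t ∈ Set.Icc (0 : ℝ) δ,
              Metric.infDist (z t)
                  ((fun v => s + v) '' (attainSpan g h s abar : Set (Esp ds))) ≤
                C * δ ^ 3 := by
  refine ⟨2 * M ^ 3, fun s abar δ _ g h hg hh => ⟨finrank_attainSpan_le g h s abar, ?_⟩⟩
  rintro F hF a haF z rfl hz t ht
  obtain ⟨ha, has, hbd⟩ := hF a haF
  set X := closedLoop g h a
  have hV : t • X (z 0) + (t ^ 2 / 2) • fderiv ℝ X (z 0) (X (z 0)) ∈
      attainSpan g h (z 0) abar :=
    add_mem (Submodule.smul_mem _ _ (closedLoop_apply_mem_attainSpan has))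
      (Submodule.smul_mem _ _ (fderiv_closedLoop_apply_mem_attainSpan
        (hg.differentiable two_ne_zero _) (fun j => (hh j).differentiable two_ne_zero _)
        (ha.differentiable two_ne_zero _) has))
  refine (Metric.infDist_le_dist_of_mem (mem_image_of_mem _ hV)).trans ?_
  rw [dist_eq_norm, ← sub_sub, ← sub_sub]
  exact norm_trajectory_sub_taylor_le (contDiff_closedLoop hg hh ha)
    (fun x => (hbd x).1) (fun x => (hbd x).2.1) (fun x => (hbd x).2.2) hz ht

/-- For twice continuously differentiable `g, h_1, …, h_{d_a}` and any
family `F` of twice continuously differentiable feedback policies taking the common value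
`ā` at `s`, whose closed-loop vector fields have zeroth, first and second derivatives
bounded by `M`, the span `V` of the `2·d_a + 2` vectors
`g s, Dg(s)(X̄), h_j s, Dh_j(s)(X̄)` has dimension at most `2·d_a + 2` and there is a
constant `C` depending only on `M` such that every trajectory of a closed-loop field of
the family started at `s` stays within distance `C·δ³` of the affine subspace `s + V`
for time up to `δ`. -/
theorem stmt_0 (ds da : ℕ) (hds : 1 ≤ ds) (hda : 1 ≤ da) (M : ℝ) (hM : 0 < M) :
    ∃ C : ℝ, ∀ (s : Esp ds) (abar : Fin da → ℝ) (δ : ℝ), 0 < δ →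
      ∀ (g : Esp ds → Esp ds) (h : Fin da → Esp ds → Esp ds),
        ContDiff ℝ 2 g → (∀ j, ContDiff ℝ 2 (h j)) →
        Module.finrank ℝ (attainSpan g h s abar) ≤ 2 * da + 2 ∧
        ∀ F : Set (Esp ds → Fin da → ℝ),
          (∀ a ∈ F, ContDiff ℝ 2 a ∧ a s = abar ∧
            ∀ x, ‖closedLoop g h a x‖ ≤ M ∧ ‖fderiv ℝ (closedLoop g h a) x‖ ≤ M ∧
              ‖fderiv ℝ (fderiv ℝ (closedLoop g h a)) x‖ ≤ M) →
          ∀ a ∈ F, ∀ z : ℝ → Esp ds, z 0 = s →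
            (∀ t ∈ Set.Icc (0 : ℝ) δ, HasDerivAt z (closedLoop g h a (z t)) t) →
            ∀ t ∈ Set.Icc (0 : ℝ) δ,
              Metric.infDist (z t)
                  ((fun v => s + v) '' (attainSpan g h s abar : Set (Esp ds))) ≤
                C * δ ^ 3 :=
  stmt_0_general ds da M
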